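/- Let n be odd and N = (n-1)/2. Define N×N matrices T_1,…,T_N by [T_m]_{j,k} = x_{m,j-k} - x_{m,j+k}, where x_{m,a} = 1 if a ≡ ±m (mod n) and 0 otherwise. Then each T_m vanishes on the main diagonal except at position (d_m, d_m) where d_m ∈ {1,…,N} satisfies 2d_m ≡ ±m (mod n); consequently T_1, …, T_N are linearly independent. -/

import Mathlib

/-- `x_{m,a} = 1` if `a ≡ ±m (mod n)`, and `0` otherwise. -/
def xInd (n : ℕ) (m : ℕ) (a : ℤ) : ℝ :=
  if (a : ZMod n) = (m : ZMod n) ∨ (a : ZMod n) = -(m : ZMod n) then 1 else 0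

/-- The matrix `T_m` with `[T_m]_{j,k} = x_{m,j-k} - x_{m,j+k}`, indices `1 ≤ j,k ≤ N`. -/
def Tmat (n N m : ℕ) : Matrix (Fin N) (Fin N) ℝ :=
  fun j k => xInd n m ((j.val : ℤ) + 1 - ((k.val : ℤ) + 1))
    - xInd n m ((j.val : ℤ) + 1 + ((k.val : ℤ) + 1))

/-!
On the diagonal, `[T_m]_{j,j} = x_{m,0} - x_{m,2j} = -x_{m,2j}` because `m ≢ 0 (mod n)`.
For odd `n = 2N + 1`, doubling permutes the classes `±1, …, ±N` of nonzero residues modulo sign: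
every `m ∈ [1, N]` satisfies `2 d ≡ ±m` for exactly one `d ∈ [1, N]`, and distinct `m` give
distinct `d`. So the diagonal of `T_m` is `-e_{d_m}` with `m ↦ d_m` injective, and the
diagonals of the `T_m` are already linearly independent.
-/

def ModEqPM (n a b : ℕ) : Prop :=
  (a : ZMod n) = b ∨ (a : ZMod n) = -b

instance (n a b : ℕ) : Decidable (ModEqPM n a b) :=
  inferInstanceAs (Decidable (_ ∨ _))

namespace ModEqPM

variable {n a b c : ℕ}

theorem symm (h : ModEqPM n a b) : ModEqPM n b a := by
  rcases h with h | h
  · exact .inl h.symm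
  · exact .inr (by rw [h, neg_neg])

theorem trans (hab : ModEqPM n a b) (hbc : ModEqPM n b c) : ModEqPM n a c := by
  rcases hab with h | h <;> rcases hbc with h' | h'
  · exact .inl (h.trans h')
  · exact .inr (h.trans h')
  · exact .inr (by rw [h, h'])
  · exact .inl (by rw [h, h', neg_neg])

theorem eq_or_add_eq (ha : a < n) (hb : b < n) (hab : 0 < a + b) (h : ModEqPM n a b) :
    a = b ∨ a + b = n := by
  rcases h with h | h
  · left
    rwa [ZMod.natCast_eq_natCast_iff', Nat.mod_eq_of_lt ha, Nat.mod_eq_of_lt hb] at h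
  · right
    obtain ⟨k, hk⟩ : n ∣ a + b := by
      rw [← ZMod.natCast_eq_zero_iff, Nat.cast_add, h, neg_add_cancel]
    rcases k with _ | _ | k
    · omega
    · omega
    · nlinarith

end ModEqPM

section Halving

variable {n N : ℕ}

theorem exists_two_mul_modEqPM (hN : 2 * N + 1 = n) {m : ℕ} (hm0 : 1 ≤ m) (hmN : m ≤ N) :
    ∃ d : Fin N, ModEqPM n (2 * (d + 1)) m := by
  rcases Nat.even_or_odd' m with ⟨s, rfl | rfl⟩
  · exact ⟨⟨s - 1, by omega⟩, .inl (by rw [Fin.val_mk, Nat.sub_add_cancel (by omega : 1 ≤ s)])⟩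
  · -- `2 (N - s) = n - m`
    refine ⟨⟨N - s - 1, by omega⟩, .inr ?_⟩
    rw [eq_neg_iff_add_eq_zero, ← Nat.cast_add, ZMod.natCast_eq_zero_iff]
    exact ⟨1, by rw [Fin.val_mk]; omega⟩

theorem eq_of_two_mul_modEqPM (hN : 2 * N + 1 = n) {m : ℕ} {d j : Fin N}
    (hd : ModEqPM n (2 * (d + 1)) m) (hj : ModEqPM n (2 * (j + 1)) m) : j = d := by
  have := (hj.trans hd.symm).eq_or_add_eq (by omega) (by omega) (by omega)
  ext
  omega

theorem eq_of_modEqPM_two_mul (hN : 2 * N + 1 = n) {m m' : ℕ} (hm : 1 ≤ m) (hmN : m ≤ N)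
    (hm'N : m' ≤ N) {d : Fin N} (h : ModEqPM n (2 * (d + 1)) m)
    (h' : ModEqPM n (2 * (d + 1)) m') : m = m' := by
  have := (h.symm.trans h').eq_or_add_eq (by omega) (by omega) (by omega)
  omega

theorem xInd_natCast (m a : ℕ) : xInd n m a = if ModEqPM n a m then 1 else 0 := by
  simp only [xInd, Int.cast_natCast]
  rfl

theorem Tmat_apply_self {m : ℕ} (hm : (m : ZMod n) ≠ 0) (j : Fin N) :
    Tmat n N m j j = -xInd n m (2 * (j + 1) : ℕ) := by
  have h_zero : xInd n m 0 = 0 := by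
    simp [xInd, eq_comm (a := (0 : ZMod n)), hm]
  rw [Tmat, sub_self, h_zero, zero_sub]
  push_cast
  ring_nf

theorem Tmat_diag_eq_single (hN : 2 * N + 1 = n) {m : ℕ} (hm : 1 ≤ m) (hmN : m ≤ N) {d : Fin N}
    (hd : ModEqPM n (2 * (d + 1)) m) : (Tmat n N m).diag = Pi.single d (-1) := by
  have hm0 : (m : ZMod n) ≠ 0 := by
    rw [Ne, ZMod.natCast_eq_zero_iff]
    exact fun h => absurd (Nat.le_of_dvd (by omega) h) (by omega)
  ext j
  rw [Matrix.diag_apply, Tmat_apply_self hm0, xInd_natCast, Pi.single_apply,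
    if_congr ⟨fun hj => eq_of_two_mul_modEqPM hN hd hj, fun h => h ▸ hd⟩ rfl rfl]
  split_ifs <;> norm_num

end Halving

theorem Tmat_diag_and_linearIndependent_general (n : ℕ) (hodd : Odd n) :
    (∀ m : ℕ, 1 ≤ m → m ≤ (n - 1) / 2 →
      ∃ d : Fin ((n - 1) / 2),
        ((2 * ((d.val : ℕ) + 1) : ZMod n) = (m : ZMod n) ∨
         (2 * ((d.val : ℕ) + 1) : ZMod n) = -(m : ZMod n)) ∧
        ∀ j : Fin ((n - 1) / 2), j ≠ d → Tmat n ((n - 1) / 2) m j j = 0)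
    ∧ LinearIndependent ℝ (fun m : Fin ((n - 1) / 2) => Tmat n ((n - 1) / 2) (m.val + 1)) := by
  have hN : 2 * ((n - 1) / 2) + 1 = n := by obtain ⟨t, rfl⟩ := hodd; omega
  constructor
  · intro m hm hmN
    obtain ⟨d, hd⟩ := exists_two_mul_modEqPM hN hm hmN
    refine ⟨d, by exact_mod_cast hd, fun j hj => ?_⟩
    simpa [hj] using congrFun (Tmat_diag_eq_single hN hm hmN hd) j
  · choose d hd using fun m : Fin ((n - 1) / 2) => exists_two_mul_modEqPM hN m.succ_pos m.isLt
    have hd_inj : Function.Injective d := fun m m' h =>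
      Fin.ext <| Nat.succ_injective <|
        eq_of_modEqPM_two_mul hN m.succ_pos m.isLt m'.isLt (hd m) (h ▸ hd m')
    have hsingle := (Pi.linearIndependent_single_of_ne_zero (R := ℝ)
      fun _ : Fin ((n - 1) / 2) => neg_ne_zero.2 (one_ne_zero : (1 : ℝ) ≠ 0)).comp d hd_inj
    have hdiag : Matrix.diagLinearMap _ ℝ ℝ ∘ (fun m : Fin ((n - 1) / 2) => Tmat n _ (m + 1)) =
        (fun i => Pi.single i (-1)) ∘ d :=
      funext fun m => Tmat_diag_eq_single hN m.succ_pos m.isLt (hd m)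
    exact .of_comp _ (hdiag ▸ hsingle)

theorem Tmat_diag_and_linearIndependent (n : ℕ) (hodd : Odd n) (hn : 3 ≤ n) :
    (∀ m : ℕ, 1 ≤ m → m ≤ (n - 1) / 2 →
      ∃ d : Fin ((n - 1) / 2),
        ((2 * ((d.val : ℕ) + 1) : ZMod n) = (m : ZMod n) ∨
         (2 * ((d.val : ℕ) + 1) : ZMod n) = -(m : ZMod n)) ∧
        ∀ j : Fin ((n - 1) / 2), j ≠ d → Tmat n ((n - 1) / 2) m j j = 0)
    ∧ LinearIndependent ℝ (fun m : Fin ((n - 1) / 2) => Tmat n ((n - 1) / 2) (m.val + 1)) :=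
  Tmat_diag_and_linearIndependent_general n hodd
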